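/- Let μ, ν be probability measures on Cantor space with full support, let M(σ) = μ([σ])/ν([σ]), and let ω satisfy liminf_n ν([ω↾(n+1)] | [ω↾n]) > 0 (ω is ν-mild). Then the following are equivalent: (1) lim_n T_{F_{n+1}}(μ,ν)(ω) = 0 where T_{F_{n+1}}(μ,ν)(ω) is the total variational distance between μ(·|[ω↾n])↾F_{n+1} and ν(·|[ω↾n])↾F_{n+1}; (2) lim_n |μ([ω↾(n+1)]|[ω↾n]) − ν([ω↾(n+1)]|[ω↾n])| = 0; (3) lim_n M(ω↾(n+1))/M(ω↾n) = 1. -/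

import Mathlib

/-!
A set of `F_{|σ|+1}` meets `[σ]` in `∅`, `[σ0]`, `[σ1]` or `[σ]`, and the one-step conditional
probabilities of either measure sum to `1`; hence the total variation between `μ(·|[σ])` and
`ν(·|[σ])` on `F_{|σ|+1}` is exactly `|μ([σb]|[σ]) - ν([σb]|[σ])|`, for either bit `b`.
The ratio `M(σb)/M(σ)` is the quotient `μ([σb]|[σ]) / ν([σb]|[σ])`, and mildness keeps the
denominators along `ω` eventually in `[c, 1]` for some `c > 0`, so the difference tends to `0`
iff the quotient tends to `1`.
-/

open MeasureTheory Filter Topology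

/-- Cantor space `2^ℕ`. -/
abbrev Cantor : Type := ℕ → Bool

/-- The basic clopen cylinder determined by a finite binary string. -/
def cyl (σ : List Bool) : Set Cantor := {ω | ∀ i : Fin σ.length, ω i = σ.get i}

/-- The first `n` bits of `ω`, as a finite binary string. -/
def pre (ω : Cantor) (n : ℕ) : List Bool := (List.range n).map ω

/-- A measure on Cantor space has full support if every cylinder has positive measure. -/
def FullSupport (ν : Measure Cantor) : Prop := ∀ σ : List Bool, 0 < ν (cyl σ)

/-- Conditional probability `ν([τ] | [σ]) = ν([τ])/ν([σ])` (intended for `τ` extending `σ`). -/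
noncomputable def cp (ν : Measure Cantor) (τ σ : List Bool) : ℝ :=
  (ν (cyl τ)).toReal / (ν (cyl σ)).toReal

/-- The conditional measure `ν(· | [σ]) = ν(· ∩ [σ]) / ν([σ])`. -/
noncomputable def condMeas (ν : Measure Cantor) (σ : List Bool) : Measure Cantor :=
  (ν (cyl σ))⁻¹ • ν.restrict (cyl σ)

/-- The σ-algebra generated by the length-`k` cylinders. -/
def Falg (k : ℕ) : MeasurableSpace Cantor :=
  MeasurableSpace.generateFrom {A | ∃ σ : List Bool, σ.length = k ∧ A = cyl σ}

/-- Total variational distance between two measures restricted to a σ-algebra `G`. -/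
noncomputable def tv (G : MeasurableSpace Cantor) (ρ τ : @Measure Cantor MeasurableSpace.pi) : ℝ :=
  ⨆ A : {A : Set Cantor // MeasurableSet[G] A}, |(ρ A.1).toReal - (τ A.1).toReal|

lemma pre_length (ω : Cantor) (n : ℕ) : (pre ω n).length = n := by simp [pre]

lemma pre_succ (ω : Cantor) (n : ℕ) : pre ω (n + 1) = pre ω n ++ [ω n] := by
  simp [pre, List.range_succ]

lemma mem_cyl_iff_pre_eq {z : Cantor} {σ : List Bool} : z ∈ cyl σ ↔ pre z σ.length = σ := by
  simp [cyl, pre, List.ext_getElem_iff, Fin.forall_iff]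

lemma mem_cyl_append_iff {z : Cantor} {σ : List Bool} {b : Bool} :
    z ∈ cyl (σ ++ [b]) ↔ z ∈ cyl σ ∧ z σ.length = b := by
  rw [mem_cyl_iff_pre_eq, mem_cyl_iff_pre_eq, List.length_append, List.length_singleton,
    pre_succ]
  constructor
  · intro h
    obtain ⟨hσ, hb⟩ := List.append_inj' h rfl
    exact ⟨hσ, List.singleton_inj.1 hb⟩
  · rintro ⟨hσ, hb⟩
    rw [hσ, hb]

lemma cyl_append_subset (σ : List Bool) (b : Bool) : cyl (σ ++ [b]) ⊆ cyl σ :=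
  fun _ hz => (mem_cyl_append_iff.1 hz).1

lemma cyl_eq_union_append (σ : List Bool) : cyl σ = cyl (σ ++ [false]) ∪ cyl (σ ++ [true]) := by
  ext z
  simp only [Set.mem_union, mem_cyl_append_iff]
  cases z σ.length <;> tauto

lemma disjoint_cyl_append (σ : List Bool) : Disjoint (cyl (σ ++ [false])) (cyl (σ ++ [true])) :=
  Set.disjoint_left.2 fun _ h₀ h₁ =>
    Bool.false_ne_true ((mem_cyl_append_iff.1 h₀).2.symm.trans (mem_cyl_append_iff.1 h₁).2)

lemma measurableSet_cyl (σ : List Bool) : MeasurableSet (cyl σ) := by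
  simp only [cyl, Set.ofPred_forall]
  exact .iInter fun i => measurableSet_eq_fun (measurable_pi_apply _) measurable_const

lemma Falg_le_pi (k : ℕ) : Falg k ≤ MeasurableSpace.pi :=
  MeasurableSpace.generateFrom_le fun _ ⟨σ, _, hA⟩ => hA ▸ measurableSet_cyl σ

lemma mem_iff_mem_of_measurableSet_Falg {k : ℕ} {A : Set Cantor} (hA : MeasurableSet[Falg k] A)
    {z z' : Cantor} (h : pre z k = pre z' k) : z ∈ A ↔ z' ∈ A := by
  refine MeasurableSpace.generateFrom_induction _ (fun A _ => z ∈ A ↔ z' ∈ A) ?_ ?_ ?_ ?_ A hA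
  · rintro _ ⟨σ, rfl, rfl⟩ -
    rw [mem_cyl_iff_pre_eq, mem_cyl_iff_pre_eq, h]
  · simp
  · exact fun _ _ ih => not_congr ih
  · intro _ _ ih
    simp only [Set.mem_iUnion]
    exact exists_congr ih

lemma inter_cyl_eq_empty_or_eq_cyl {k : ℕ} {A : Set Cantor} (hA : MeasurableSet[Falg k] A)
    {τ : List Bool} (hτ : τ.length = k) : A ∩ cyl τ = ∅ ∨ A ∩ cyl τ = cyl τ := by
  refine or_iff_not_imp_left.2 fun h => Set.inter_eq_right.2 fun z' hz' => ?_
  obtain ⟨z, hzA, hz⟩ := Set.nonempty_iff_ne_empty.2 h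
  rw [mem_cyl_iff_pre_eq, hτ] at hz hz'
  exact (mem_iff_mem_of_measurableSet_Falg hA (hz.trans hz'.symm)).1 hzA

lemma inter_cyl_eq_of_measurableSet_Falg {σ : List Bool} {A : Set Cantor}
    (hA : MeasurableSet[Falg (σ.length + 1)] A) :
    A ∩ cyl σ = ∅ ∨ A ∩ cyl σ = cyl (σ ++ [false]) ∨ A ∩ cyl σ = cyl (σ ++ [true]) ∨
      A ∩ cyl σ = cyl σ := by
  have hlen (b : Bool) : (σ ++ [b]).length = σ.length + 1 := by simp
  have hsplit : A ∩ cyl σ = A ∩ cyl (σ ++ [false]) ∪ A ∩ cyl (σ ++ [true]) := by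
    rw [cyl_eq_union_append σ, Set.inter_union_distrib_left]
  rw [hsplit]
  rcases inter_cyl_eq_empty_or_eq_cyl hA (hlen false) with h₀ | h₀ <;>
    rcases inter_cyl_eq_empty_or_eq_cyl hA (hlen true) with h₁ | h₁ <;>
    simp [h₀, h₁, ← cyl_eq_union_append]

section ConditionalProbability

variable {μ ν : Measure Cantor} {σ : List Bool}

lemma condMeas_apply_toReal {A : Set Cantor} (hA : MeasurableSet A) :
    (condMeas μ σ A).toReal = (μ (A ∩ cyl σ)).toReal / (μ (cyl σ)).toReal := by
  simp [condMeas, Measure.restrict_apply hA, ENNReal.toReal_mul, div_eq_inv_mul]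

lemma condMeas_cyl_append_toReal (b : Bool) :
    (condMeas μ σ (cyl (σ ++ [b]))).toReal = cp μ (σ ++ [b]) σ := by
  rw [condMeas_apply_toReal (measurableSet_cyl _), Set.inter_eq_left.2 (cyl_append_subset σ b),
    cp]

variable [IsFiniteMeasure μ] [IsFiniteMeasure ν]

lemma cp_append_false_add_cp_append_true (hμσ : μ (cyl σ) ≠ 0) :
    cp μ (σ ++ [false]) σ + cp μ (σ ++ [true]) σ = 1 := by
  rw [cp, cp, ← add_div, ← ENNReal.toReal_add (measure_ne_top _ _) (measure_ne_top _ _),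
    ← measure_union (disjoint_cyl_append σ) (measurableSet_cyl _), ← cyl_eq_union_append,
    div_self (ENNReal.toReal_pos hμσ (measure_ne_top _ _)).ne']

lemma abs_cp_sub_cp_append_eq (hμσ : μ (cyl σ) ≠ 0) (hνσ : ν (cyl σ) ≠ 0) (b : Bool) :
    |cp μ (σ ++ [b]) σ - cp ν (σ ++ [b]) σ| =
      |cp μ (σ ++ [false]) σ - cp ν (σ ++ [false]) σ| := by
  cases b
  · rfl
  · rw [← abs_neg]
    congr 1
    linarith [cp_append_false_add_cp_append_true hμσ, cp_append_false_add_cp_append_true hνσ]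

lemma abs_condMeas_sub_le (hμσ : μ (cyl σ) ≠ 0) (hνσ : ν (cyl σ) ≠ 0) {A : Set Cantor}
    (hA : MeasurableSet[Falg (σ.length + 1)] A) :
    |(condMeas μ σ A).toReal - (condMeas ν σ A).toReal| ≤
      |cp μ (σ ++ [false]) σ - cp ν (σ ++ [false]) σ| := by
  rw [condMeas_apply_toReal (Falg_le_pi _ _ hA), condMeas_apply_toReal (Falg_le_pi _ _ hA)]
  rcases inter_cyl_eq_of_measurableSet_Falg hA with h | h | h | h <;> rw [h]
  · simp
  · rfl
  · exact (abs_cp_sub_cp_append_eq hμσ hνσ true).le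
  · rw [div_self (ENNReal.toReal_pos hμσ (measure_ne_top _ _)).ne',
      div_self (ENNReal.toReal_pos hνσ (measure_ne_top _ _)).ne', sub_self, abs_zero]
    exact abs_nonneg _

lemma tv_Falg_succ_eq (hμσ : μ (cyl σ) ≠ 0) (hνσ : ν (cyl σ) ≠ 0) (b : Bool) :
    tv (Falg (σ.length + 1)) (condMeas μ σ) (condMeas ν σ) =
      |cp μ (σ ++ [b]) σ - cp ν (σ ++ [b]) σ| := by
  rw [abs_cp_sub_cp_append_eq hμσ hνσ]
  have hbound (A : {A : Set Cantor // MeasurableSet[Falg (σ.length + 1)] A}) :=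
    abs_condMeas_sub_le hμσ hνσ A.2
  have hcyl : MeasurableSet[Falg (σ.length + 1)] (cyl (σ ++ [false])) :=
    MeasurableSpace.measurableSet_generateFrom ⟨σ ++ [false], by simp, rfl⟩
  refine le_antisymm (ciSup_le hbound)
    (le_ciSup_of_le ⟨_, Set.forall_mem_range.2 hbound⟩ ⟨_, hcyl⟩ ?_)
  rw [condMeas_cyl_append_toReal, condMeas_cyl_append_toReal]

end ConditionalProbability

lemma cp_nonneg (μ : Measure Cantor) (τ σ : List Bool) : 0 ≤ cp μ τ σ := by
  unfold cp
  positivity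

lemma cp_le_one_of_subset {μ : Measure Cantor} [IsFiniteMeasure μ] {τ σ : List Bool}
    (h : cyl τ ⊆ cyl σ) : cp μ τ σ ≤ 1 :=
  div_le_one_of_le₀ (ENNReal.toReal_mono (measure_ne_top _ _) (measure_mono h)) ENNReal.toReal_nonneg

lemma tendsto_abs_sub_iff_tendsto_div {α : Type*} {l : Filter α} {a b : α → ℝ} {c C : ℝ}
    (hc : 0 < c) (hb : ∀ᶠ x in l, c ≤ b x ∧ b x ≤ C) :
    Tendsto (fun x => |a x - b x|) l (𝓝 0) ↔ Tendsto (fun x => a x / b x) l (𝓝 1) := by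
  rw [tendsto_iff_norm_sub_tendsto_zero (f := fun x => a x / b x)]
  simp only [Real.norm_eq_abs]
  have habs : ∀ᶠ x in l, |a x / b x - 1| = |a x - b x| / b x := hb.mono fun x hx => by
    rw [div_sub_one (hc.trans_le hx.1).ne', abs_div,
      abs_of_pos (hc.trans_le hx.1)]
  constructor
  · intro h
    refine squeeze_zero' (.of_forall fun _ => abs_nonneg _) ?_ (by simpa using h.div_const c)
    filter_upwards [hb, habs] with x hx hx'
    rw [hx']
    exact div_le_div_of_nonneg_left (abs_nonneg _) hc hx.1
  · intro h
    refine squeeze_zero' (.of_forall fun _ => abs_nonneg _) ?_ (by simpa using h.const_mul C)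
    filter_upwards [hb, habs] with x hx hx'
    rw [hx', mul_div_assoc', mul_comm C, le_div_iff₀ (hc.trans_le hx.1)]
    exact mul_le_mul_of_nonneg_left hx.2 (abs_nonneg _)

/-- For a `ν`-mild point `ω`, the following are equivalent: the one-step total variational
distances tend to `0`; the one-step conditional probabilities merge; the successive ratios of
the martingale `M(σ) = μ([σ])/ν([σ])` tend to `1`. -/
theorem stmt10 (μ ν : Measure Cantor) [IsProbabilityMeasure μ] [IsProbabilityMeasure ν]
    (hμ : FullSupport μ) (hν : FullSupport ν) (ω : Cantor)
    (hmild : 0 < Filter.liminf (fun n : ℕ => cp ν (pre ω (n + 1)) (pre ω n)) atTop) :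
    (Tendsto (fun n : ℕ =>
        tv (Falg (n + 1)) (condMeas μ (pre ω n)) (condMeas ν (pre ω n))) atTop (𝓝 0) ↔
      Tendsto (fun n : ℕ =>
        |cp μ (pre ω (n + 1)) (pre ω n) - cp ν (pre ω (n + 1)) (pre ω n)|) atTop (𝓝 0)) ∧
    (Tendsto (fun n : ℕ =>
        |cp μ (pre ω (n + 1)) (pre ω n) - cp ν (pre ω (n + 1)) (pre ω n)|) atTop (𝓝 0) ↔
      Tendsto (fun n : ℕ =>
        ((μ (cyl (pre ω (n + 1)))).toReal / (ν (cyl (pre ω (n + 1)))).toReal) /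
          ((μ (cyl (pre ω n))).toReal / (ν (cyl (pre ω n))).toReal)) atTop (𝓝 1)) := by
  have htv : (fun n : ℕ => tv (Falg (n + 1)) (condMeas μ (pre ω n)) (condMeas ν (pre ω n))) =
      fun n => |cp μ (pre ω (n + 1)) (pre ω n) - cp ν (pre ω (n + 1)) (pre ω n)| := by
    funext n
    have h := tv_Falg_succ_eq (σ := pre ω n) (hμ _).ne' (hν _).ne' (ω n)
    rwa [pre_length, ← pre_succ] at h
  have hratio : (fun n : ℕ =>
      ((μ (cyl (pre ω (n + 1)))).toReal / (ν (cyl (pre ω (n + 1)))).toReal) /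
        ((μ (cyl (pre ω n))).toReal / (ν (cyl (pre ω n))).toReal)) =
      fun n => cp μ (pre ω (n + 1)) (pre ω n) / cp ν (pre ω (n + 1)) (pre ω n) :=
    funext fun _ => div_div_div_comm _ _ _ _
  have hlower := eventually_lt_of_lt_liminf (half_lt_self hmild)
    (isBoundedUnder_of ⟨0, fun n => cp_nonneg ν _ _⟩)
  refine ⟨by rw [htv], ?_⟩
  rw [hratio]
  exact tendsto_abs_sub_iff_tendsto_div (C := 1) (half_pos hmild) (hlower.mono fun n hn =>
    ⟨hn.le, cp_le_one_of_subset (pre_succ ω n ▸ cyl_append_subset _ _)⟩)
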